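/- Let μ > 0, A ∈ ℝ^{m×n}, Q = μI + [[0, Aᵀ],[−A, 0]], and G_new = [[−I, I],[0, −Q/μ]]. Then every eigenvalue λ of G_new satisfies (λ+1)(λ+1 ± i√δ/μ) = 0 for some eigenvalue δ of AᵀA; in particular every eigenvalue of G_new has real part equal to −1. -/

import Mathlib

/-! `G_new` is block upper triangular, so its spectrum is `{-1}` together with the spectrum of
`-1 - K / μ`, where `K = [[0, Aᵀ], [-A, 0]]`. If `K (x, y) = ν (x, y)` then `AᵀA x = -ν² x`, so
either `ν = 0` (when `x = 0`) or `-ν²` is an eigenvalue of the positive semidefinite `AᵀA`.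
In both cases `ν = ±i√δ` with `δ ≥ 0`, and `λ = -1 - ν / μ`. -/

open Matrix

/-- The matrix `Q = μI + [[0, Aᵀ],[−A, 0]]` of the quadratic game. -/
noncomputable def Qgame {n m : ℕ} (μ : ℝ) (A : Matrix (Fin m) (Fin n) ℝ) :
    Matrix (Fin n ⊕ Fin m) (Fin n ⊕ Fin m) ℝ :=
  μ • (1 : Matrix (Fin n ⊕ Fin m) (Fin n ⊕ Fin m) ℝ) + Matrix.fromBlocks 0 Aᵀ (-A) 0

/-- The velocity-corrected model matrix `G_new = [[−I, I],[0, −Q/μ]]`. -/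
noncomputable def Gnew {n m : ℕ} (μ : ℝ) (A : Matrix (Fin m) (Fin n) ℝ) :
    Matrix ((Fin n ⊕ Fin m) ⊕ (Fin n ⊕ Fin m)) ((Fin n ⊕ Fin m) ⊕ (Fin n ⊕ Fin m)) ℝ :=
  Matrix.fromBlocks (-1) 1 0 (-(μ⁻¹ • Qgame μ A))

theorem spectrum.subset_singleton_algebraMap {𝕜 A : Type*} [Field 𝕜] [Ring A] [Algebra 𝕜 A]
    (k : 𝕜) : spectrum 𝕜 (algebraMap 𝕜 A k) ⊆ {k} := by
  rcases subsingleton_or_nontrivial A with _ | _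
  · simp [spectrum.of_subsingleton]
  · rw [spectrum.scalar_eq]

namespace Matrix

variable {𝕜 : Type*} [Field 𝕜] {m n : Type*} [Fintype m] [DecidableEq m] [Fintype n] [DecidableEq n]

theorem mem_spectrum_iff_exists_mulVec_eq_smul {M : Matrix n n 𝕜} {z : 𝕜} :
    z ∈ spectrum 𝕜 M ↔ ∃ v ≠ 0, M *ᵥ v = z • v := by
  rw [← spectrum_toLin', ← Module.End.hasEigenvalue_iff_mem_spectrum]
  simp [Module.End.hasEigenvalue_iff, Submodule.ne_bot_iff, and_comm]

theorem eq_zero_or_neg_sq_mem_spectrum_of_mem_spectrum_fromBlocks (A : Matrix m n 𝕜) {ν : 𝕜}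
    (hν : ν ∈ spectrum 𝕜 (fromBlocks 0 Aᵀ (-A) 0)) : ν = 0 ∨ -ν ^ 2 ∈ spectrum 𝕜 (Aᵀ * A) := by
  obtain ⟨v, hv, hKv⟩ := mem_spectrum_iff_exists_mulVec_eq_smul.mp hν
  set x := v ∘ Sum.inl
  set y := v ∘ Sum.inr
  have hKv' : fromBlocks 0 Aᵀ (-A) 0 *ᵥ Sum.elim x y = ν • Sum.elim x y := by
    rwa [Sum.elim_comp_inl_inr]
  rw [fromBlocks_mulVec, Sum.elim_comp_inl, Sum.elim_comp_inr] at hKv'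
  have hx : Aᵀ *ᵥ y = ν • x := by
    ext i
    simpa using congrFun hKv' (Sum.inl i)
  have hy : A *ᵥ x = -(ν • y) := by
    ext i
    simpa [neg_mulVec, neg_eq_iff_eq_neg] using congrFun hKv' (Sum.inr i)
  by_cases hx0 : x = 0
  · left
    have hy0 : y ≠ 0 := by
      rintro hy0
      apply hv
      rw [← Sum.elim_comp_inl_inr v, ← Sum.elim_zero_zero]
      exact congrArg₂ Sum.elim hx0 hy0
    rw [hx0, mulVec_zero, zero_eq_neg, smul_eq_zero] at hy
    exact hy.resolve_right hy0
  · right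
    refine mem_spectrum_iff_exists_mulVec_eq_smul.mpr ⟨x, hx0, ?_⟩
    rw [← mulVec_mulVec, hy, mulVec_neg, mulVec_smul, hx, smul_smul, neg_smul, sq]

theorem spectrum_fromBlocks_zero₂₁ (A : Matrix m m 𝕜) (B : Matrix m n 𝕜) (D : Matrix n n 𝕜) :
    spectrum 𝕜 (fromBlocks A B 0 D) = spectrum 𝕜 A ∪ spectrum 𝕜 D := by
  ext z
  simp [mem_spectrum_iff_isRoot_charpoly, charpoly_fromBlocks_zero₂₁]

end Matrix

open scoped ComplexOrder in
theorem Matrix.exists_nonneg_ofReal_eq_of_mem_spectrum_transpose_mul_self {m n : Type*}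
    [Fintype m] [Fintype n] [DecidableEq n] (A : Matrix m n ℝ) {z : ℂ}
    (hz : z ∈ spectrum ℂ ((Aᵀ * A).map Complex.ofReal)) : ∃ d : ℝ, 0 ≤ d ∧ (d : ℂ) = z := by
  have hmap : (Aᵀ * A).map Complex.ofReal = (A.map Complex.ofReal)ᴴ * A.map Complex.ofReal := by
    ext i j
    simp [Matrix.mul_apply]
  rw [hmap] at hz
  exact RCLike.nonneg_iff_exists_ofReal.mp <|
    (posSemidef_iff_isHermitian_and_spectrum_nonneg.mp (posSemidef_conjTranspose_mul_self _)).2 hz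

theorem Complex.eq_or_eq_neg_of_sq_eq_neg_ofReal {z : ℂ} {d : ℝ} (hd : 0 ≤ d) (h : z ^ 2 = -d) :
    z = I * Real.sqrt d ∨ z = -(I * Real.sqrt d) := by
  apply sq_eq_sq_iff_eq_or_eq_neg.mp
  rw [h, mul_pow, I_sq, ← ofReal_pow, Real.sq_sqrt hd]
  ring

theorem Gnew_map_ofReal {n m : ℕ} {μ : ℝ} (hμ : μ ≠ 0) (A : Matrix (Fin m) (Fin n) ℝ) :
    (Gnew μ A).map Complex.ofReal = fromBlocks (algebraMap ℂ _ (-1)) 1 0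
      (algebraMap ℂ _ (-1) -
        (μ : ℂ)⁻¹ • fromBlocks 0 (A.map Complex.ofReal)ᵀ (-A.map Complex.ofReal) 0) := by
  ext (⟨i|i⟩|⟨i|i⟩) (⟨j|j⟩|⟨j|j⟩) <;>
    simp [Gnew, Qgame, Matrix.one_apply, apply_ite Complex.ofReal, hμ]

theorem exists_eq_neg_one_sub_div_of_mem_spectrum_Gnew {n m : ℕ} {μ : ℝ} (hμ : μ ≠ 0)
    (A : Matrix (Fin m) (Fin n) ℝ) {lam : ℂ}
    (hlam : lam ∈ spectrum ℂ ((Gnew μ A).map Complex.ofReal)) :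
    ∃ ν : ℂ, (ν = 0 ∨ -ν ^ 2 ∈ spectrum ℂ ((Aᵀ * A).map Complex.ofReal)) ∧ lam = -1 - ν / μ := by
  rw [Gnew_map_ofReal hμ, Matrix.spectrum_fromBlocks_zero₂₁] at hlam
  rcases hlam with hlam | hlam
  · exact ⟨0, Or.inl rfl, by simpa using spectrum.subset_singleton_algebraMap _ hlam⟩
  · have hμ' : (μ : ℂ)⁻¹ ≠ 0 := by simpa using hμ
    rw [← spectrum.singleton_sub_eq, ← Units.smul_mk0 hμ', spectrum.unit_smul_eq_smul] at hlam
    obtain ⟨_, rfl, _, ⟨ν, hν, rfl⟩, rfl⟩ := hlam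
    refine ⟨ν, ?_, by simp [div_eq_inv_mul]⟩
    have hAA : (Aᵀ * A).map Complex.ofReal = (A.map Complex.ofReal)ᵀ * A.map Complex.ofReal :=
      Matrix.map_mul (f := Complex.ofRealHom)
    rw [hAA]
    exact Matrix.eq_zero_or_neg_sq_mem_spectrum_of_mem_spectrum_fromBlocks _ hν

theorem eigenvalues_Gnew {n m : ℕ} (μ : ℝ) (hμ : 0 < μ)
    (A : Matrix (Fin m) (Fin n) ℝ) :
    ∀ lam ∈ spectrum ℂ ((Gnew μ A).map Complex.ofReal),
      (∃ δ : ℝ, 0 ≤ δ ∧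
        (δ = 0 ∨ (δ : ℂ) ∈ spectrum ℂ ((Aᵀ * A).map Complex.ofReal)) ∧
        ((lam + 1) * (lam + 1 + Complex.I * ((Real.sqrt δ / μ : ℝ) : ℂ)) = 0 ∨
         (lam + 1) * (lam + 1 - Complex.I * ((Real.sqrt δ / μ : ℝ) : ℂ)) = 0)) ∧
      lam.re = -1 := by
  intro lam hlam
  obtain ⟨ν, hν, rfl⟩ := exists_eq_neg_one_sub_div_of_mem_spectrum_Gnew hμ.ne' A hlam
  obtain ⟨δ, hδ0, hδ, hνδ⟩ : ∃ δ : ℝ, 0 ≤ δ ∧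
      (δ = 0 ∨ (δ : ℂ) ∈ spectrum ℂ ((Aᵀ * A).map Complex.ofReal)) ∧ ν ^ 2 = -δ := by
    rcases hν with rfl | hν
    · exact ⟨0, le_rfl, Or.inl rfl, by simp⟩
    · obtain ⟨δ, hδ0, hδ⟩ :=
        Matrix.exists_nonneg_ofReal_eq_of_mem_spectrum_transpose_mul_self A hν
      exact ⟨δ, hδ0, Or.inr (hδ ▸ hν), by rw [hδ, neg_neg]⟩
  rcases Complex.eq_or_eq_neg_of_sq_eq_neg_ofReal hδ0 hνδ with rfl | rfl
  · refine ⟨⟨δ, hδ0, hδ, Or.inl ?_⟩, by simp⟩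
    push_cast
    ring
  · refine ⟨⟨δ, hδ0, hδ, Or.inr ?_⟩, by simp⟩
    push_cast
    ring
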